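/- Combining the previous identities: Let h, c₁,…,c_m, a be twice continuously differentiable, Y : [0,T] → ℝ continuously differentiable with Y(0)=0, ζ(t) ∈ ℝ^{m+2} defined by ζ¹(t)=Y(t)+ζ¹₀, ζ²(t)=ζ²₀−t/2, ζⁱ(t)=ζⁱ₀ (i≥3). Set c•=(h,h²,c), g(t,x)=ζ(t)·c•(x)+β₀, q(t,x)=exp(g(t,x)), and u(t,x)=(1/2)∂ₓa(x)+(1/2)a(x)∂ₓg(t,x). Then q satisfies, for all (t,x): ∂ₜ q(t,x) = −∂ₓ(u(t,x)q(t,x)) + (1/2)∂ₓₓ(a(x)q(t,x)) − (1/2)h(x)²q(t,x) + h(x)q(t,x)Y'(t). -/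

import Mathlib

/-!
Since `∂ₓ q = q ∂ₓ g`, the drift is chosen so that `u q = ½ ∂ₓ (a q)`: the Fokker–Planck part
`-∂ₓ (u q) + ½ ∂ₓₓ (a q)` vanishes identically. What remains is the time derivative of
`q = exp g`, which is `q (Y' h - h² / 2)`.
-/

open Real

lemma drift_mul_exp_eq_half_deriv {a G : ℝ → ℝ} (ha : Differentiable ℝ a)
    (hG : Differentiable ℝ G) (x : ℝ) :
    ((1/2) * deriv a x + (1/2) * a x * deriv G x) * exp (G x)
      = (1/2) * deriv (fun ξ => a ξ * exp (G ξ)) x := by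
  rw [((ha x).hasDerivAt.fun_mul (hG x).hasDerivAt.exp).deriv]
  ring

lemma deriv_drift_mul_exp {a G : ℝ → ℝ} (ha : Differentiable ℝ a)
    (hG : Differentiable ℝ G) (x : ℝ) :
    deriv (fun ξ => ((1/2) * deriv a ξ + (1/2) * a ξ * deriv G ξ) * exp (G ξ)) x
      = (1/2) * deriv (deriv fun ξ => a ξ * exp (G ξ)) x := by
  simp only [drift_mul_exp_eq_half_deriv ha hG]
  exact deriv_const_mul_field _

lemma hasDerivAt_natural_params {Y : ℝ → ℝ} {y t : ℝ} (hY : HasDerivAt Y y t)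
    (ζ₁ ζ₂ k : ℝ) :
    HasDerivAt (fun τ => (Y τ + ζ₁) * k + (ζ₂ - τ / 2) * k ^ 2) (y * k - k ^ 2 / 2) t := by
  have hlin : HasDerivAt (fun τ : ℝ => ζ₂ - τ / 2) (-(1/2)) t := by
    simpa using ((hasDerivAt_id t).div_const 2).const_sub ζ₂
  exact (((hY.add_const ζ₁).mul_const k).fun_add (hlin.mul_const (k ^ 2))).congr_deriv (by ring)

theorem stmt16_general (m : ℕ)
    (h a : ℝ → ℝ) (c : Fin m → ℝ → ℝ)
    (hh : ContDiff ℝ 2 h) (ha : ContDiff ℝ 2 a) (hc : ∀ i, ContDiff ℝ 2 (c i))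
    (Y : ℝ → ℝ) (hY : ContDiff ℝ 1 Y)
    (ζ₁₀ ζ₂₀ β₀ : ℝ) (θ₀ : Fin m → ℝ)
    (g : ℝ → ℝ → ℝ) (q : ℝ → ℝ → ℝ) (u : ℝ → ℝ → ℝ)
    (hgdef : ∀ t x, g t x = (Y t + ζ₁₀) * h x + (ζ₂₀ - t / 2) * (h x) ^ 2
        + (∑ i, θ₀ i * c i x) + β₀)
    (hqdef : ∀ t x, q t x = Real.exp (g t x))
    (hudef : ∀ t x, u t x = (1/2) * deriv a x + (1/2) * a x * deriv (g t) x) :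
    ∀ t x : ℝ,
      deriv (fun τ => q τ x) t
        = -deriv (fun ξ => u t ξ * q t ξ) x
          + (1/2) * deriv (deriv (fun ξ => a ξ * q t ξ)) x
          - (1/2) * (h x) ^ 2 * q t x
          + h x * q t x * deriv Y t := by
  intro t x
  have hhd := hh.differentiable two_ne_zero
  have hcd i := (hc i).differentiable two_ne_zero
  have hgt : Differentiable ℝ (g t) := by
    rw [funext (hgdef t)]
    fun_prop
  have hflux : deriv (fun ξ => u t ξ * q t ξ) x
      = (1/2) * deriv (deriv fun ξ => a ξ * q t ξ) x := by
    simp only [hudef, hqdef]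
    exact deriv_drift_mul_exp (ha.differentiable two_ne_zero) hgt x
  have htime : HasDerivAt (fun τ => q τ x) (q t x * (deriv Y t * h x - h x ^ 2 / 2)) t := by
    simp only [hqdef, hgdef]
    exact (((hasDerivAt_natural_params (hY.differentiable one_ne_zero t).hasDerivAt
      ζ₁₀ ζ₂₀ (h x)).add_const _).add_const β₀).exp
  rw [htime.deriv, hflux]
  ring

theorem stmt16 (m : ℕ) (T : ℝ) (hT : 0 < T)
    (h a : ℝ → ℝ) (c : Fin m → ℝ → ℝ)
    (hh : ContDiff ℝ 2 h) (ha : ContDiff ℝ 2 a) (hc : ∀ i, ContDiff ℝ 2 (c i))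
    (Y : ℝ → ℝ) (hY : ContDiff ℝ 1 Y) (hY0 : Y 0 = 0)
    (ζ₁₀ ζ₂₀ β₀ : ℝ) (θ₀ : Fin m → ℝ)
    (g : ℝ → ℝ → ℝ) (q : ℝ → ℝ → ℝ) (u : ℝ → ℝ → ℝ)
    (hgdef : ∀ t x, g t x = (Y t + ζ₁₀) * h x + (ζ₂₀ - t / 2) * (h x) ^ 2
        + (∑ i, θ₀ i * c i x) + β₀)
    (hqdef : ∀ t x, q t x = Real.exp (g t x))
    (hudef : ∀ t x, u t x = (1/2) * deriv a x + (1/2) * a x * deriv (g t) x) :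
    ∀ t x : ℝ,
      deriv (fun τ => q τ x) t
        = -deriv (fun ξ => u t ξ * q t ξ) x
          + (1/2) * deriv (deriv (fun ξ => a ξ * q t ξ)) x
          - (1/2) * (h x) ^ 2 * q t x
          + h x * q t x * deriv Y t :=
  stmt16_general m h a c hh ha hc Y hY ζ₁₀ ζ₂₀ β₀ θ₀ g q u hgdef hqdef hudef
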